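/- arXiv:2403.01914 — 3 statements merged into one kernel-verified Lean document; each statement's English description precedes it below -/
import Mathlib

section
/- Let $m \ge 1$ and let $d_1, d_2$ be divisors of $m$. Then $\sum_{d \mid m} C_{d_1}(m/d) \, C_d(m/d_2)$ equals $m$ if $d_1 = d_2$ and equals $0$ otherwise. -/
/-!
Let `e(x) = exp (2πi x)`. Writing each `k ∈ [1, m]` uniquely as `j * (m / d)` with `d ∣ m` and `j`
coprime to `d` turns `∑_{d ∣ m} f (m / d) C_d(a)` into `∑_{k ≤ m} f (gcd k m) e(k a / m)`.
For `f = 1` this is `∑_{d ∣ n} C_d(a) = n [n ∣ a]`, so by Möbius inversion `C_q(a)` only depends on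
which divisors of `q` divide `a`; in particular `C_{d₁}(gcd k m) = C_{d₁}(k)`. The sum therefore
equals `∑_{k ≤ m} C_{d₁}(k) e(k / d₂) = ∑_i ∑_{k ≤ m} e(k (i / d₁ + 1 / d₂))`, and for `i` coprime
to `d₁` the number `i / d₁ + 1 / d₂` is an integer exactly when `d₁ = d₂` and `i ≡ -1 (mod d₁)`.
-/

noncomputable def ramanujanSum (m : ℕ) (a : ℤ) : ℂ :=
  ∑ j ∈ (Finset.Icc 1 m).filter (fun j => Nat.gcd j m = 1),
    Complex.exp (2 * Real.pi * Complex.I * j * a / m)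

open Finset Complex

theorem sum_Icc_pow_of_pow_eq_one {K : Type*} [Field K] [DecidableEq K] {z : K} {n : ℕ}
    (hz : z ^ n = 1) : ∑ k ∈ Icc 1 n, z ^ k = if z = 1 then (n : K) else 0 := by
  have shift : ∑ k ∈ Icc 1 n, z ^ k = ∑ k ∈ range n, z ^ k := by
    have h := (sum_range_succ' (z ^ ·) n).symm.trans (sum_range_succ (z ^ ·) n)
    rw [pow_zero, hz, add_left_inj] at h
    rw [← Ico_add_one_right_eq_Icc, sum_Ico_eq_sum_range, Nat.add_sub_cancel, ← h]
    simp_rw [add_comm 1]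
  split_ifs with h1
  · simp [h1]
  · rw [shift, geom_sum_eq h1, hz, sub_self, zero_div]

theorem sum_Icc_exp_eq_ite {n : ℕ} (hn : n ≠ 0) (a : ℤ) :
    ∑ k ∈ Icc 1 n, exp (2 * Real.pi * I * k * a / n) = if (n : ℤ) ∣ a then (n : ℂ) else 0 := by
  have hζ := isPrimitiveRoot_exp n hn
  have hpow : ∀ k : ℕ,
      exp (2 * Real.pi * I * k * a / n) = (exp (2 * Real.pi * I / n) ^ a) ^ k := by
    intro k
    rw [← zpow_natCast, ← zpow_mul, ← exp_int_mul]
    congr 1; push_cast; ring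
  have hzn : (exp (2 * Real.pi * I / n) ^ a) ^ n = 1 := by
    rw [← zpow_natCast, ← zpow_mul, mul_comm a, zpow_mul, zpow_natCast, hζ.pow_eq_one, one_zpow]
  simp_rw [hpow, sum_Icc_pow_of_pow_eq_one hzn, hζ.zpow_eq_one_iff_dvd]

def coprimeIcc (n : ℕ) : Finset ℕ := {j ∈ Icc 1 n | Nat.gcd j n = 1}

theorem mem_coprimeIcc {n j : ℕ} : j ∈ coprimeIcc n ↔ (1 ≤ j ∧ j ≤ n) ∧ Nat.gcd j n = 1 := by
  rw [coprimeIcc, mem_filter, mem_Icc]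

theorem gcd_mul_div_self_of_coprime {d m j : ℕ} (hdm : d ∣ m) (hj : Nat.gcd j d = 1) :
    Nat.gcd (j * (m / d)) m = m / d := by
  conv_lhs => arg 2; rw [← Nat.mul_div_cancel' hdm]
  rw [Nat.gcd_mul_right, hj, one_mul]

theorem sum_divisors_sum_coprimeIcc {M : Type*} [AddCommMonoid M] (m : ℕ) (F : ℕ → M) :
    ∑ d ∈ m.divisors, ∑ j ∈ coprimeIcc d, F (j * (m / d)) = ∑ k ∈ Icc 1 m, F k := by
  rcases Nat.eq_zero_or_pos m with rfl | hm
  · simp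
  rw [sum_sigma']
  refine sum_nbij' (fun p => p.2 * (m / p.1)) (fun k => ⟨m / Nat.gcd k m, k / Nat.gcd k m⟩)
    ?_ ?_ ?_ ?_ (fun _ _ => rfl)
  · rintro ⟨d, j⟩ hp
    simp only [mem_sigma, Nat.mem_divisors, mem_coprimeIcc, mem_Icc] at hp ⊢
    obtain ⟨⟨hdm, -⟩, ⟨hj1, hjd⟩, -⟩ := hp
    have hmd : 0 < m / d := Nat.div_pos (Nat.le_of_dvd hm hdm) (Nat.pos_of_dvd_of_pos hdm hm)
    refine ⟨Nat.mul_pos hj1 hmd, ?_⟩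
    calc j * (m / d) ≤ d * (m / d) := Nat.mul_le_mul_right _ hjd
      _ = m := Nat.mul_div_cancel' hdm
  · intro k hk
    simp only [mem_sigma, Nat.mem_divisors, mem_coprimeIcc, mem_Icc] at hk ⊢
    have hg : 0 < Nat.gcd k m := Nat.gcd_pos_of_pos_right k hm
    refine ⟨⟨Nat.div_dvd_of_dvd (Nat.gcd_dvd_right k m), hm.ne'⟩,
      ⟨Nat.div_pos (Nat.gcd_le_left m hk.1) hg, Nat.div_le_div_right hk.2⟩,
      Nat.coprime_div_gcd_div_gcd hg⟩
  · rintro ⟨d, j⟩ hp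
    simp only [mem_sigma, Nat.mem_divisors, mem_coprimeIcc] at hp
    obtain ⟨⟨hdm, -⟩, -, hjd⟩ := hp
    have hmd : 0 < m / d := Nat.div_pos (Nat.le_of_dvd hm hdm) (Nat.pos_of_dvd_of_pos hdm hm)
    simp only [gcd_mul_div_self_of_coprime hdm hjd, Nat.div_div_self hdm hm.ne',
      Nat.mul_div_cancel j hmd]
  · intro k _
    simp only [Nat.div_div_self (Nat.gcd_dvd_right k m) hm.ne',
      Nat.div_mul_cancel (Nat.gcd_dvd_left k m)]

theorem ramanujanSum_eq_sum_coprimeIcc (n : ℕ) (a : ℤ) :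
    ramanujanSum n a = ∑ j ∈ coprimeIcc n, exp (2 * Real.pi * I * j * a / n) := rfl

theorem sum_divisors_mul_ramanujanSum (m : ℕ) (f : ℕ → ℂ) (a : ℤ) :
    ∑ d ∈ m.divisors, f (m / d) * ramanujanSum d a =
      ∑ k ∈ Icc 1 m, f (Nat.gcd k m) * exp (2 * Real.pi * I * k * a / m) := by
  rw [← sum_divisors_sum_coprimeIcc]
  refine sum_congr rfl fun d hd => ?_
  obtain ⟨hdm, hm⟩ := Nat.mem_divisors.mp hd
  have hd0 : (d : ℂ) ≠ 0 := Nat.cast_ne_zero.mpr (ne_zero_of_dvd_ne_zero hm hdm)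
  rw [ramanujanSum_eq_sum_coprimeIcc, mul_sum]
  refine sum_congr rfl fun j hj => ?_
  rw [gcd_mul_div_self_of_coprime hdm (mem_coprimeIcc.mp hj).2]
  push_cast [Nat.cast_div hdm hd0]
  field_simp

theorem sum_divisors_ramanujanSum {n : ℕ} (hn : n ≠ 0) (a : ℤ) :
    ∑ d ∈ n.divisors, ramanujanSum d a = if (n : ℤ) ∣ a then (n : ℂ) else 0 := by
  simpa [← sum_Icc_exp_eq_ite hn] using sum_divisors_mul_ramanujanSum n 1 a

open ArithmeticFunction ArithmeticFunction.Moebius in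
theorem ramanujanSum_eq_sum_moebius {n : ℕ} (hn : 0 < n) (a : ℤ) :
    ramanujanSum n a = ∑ x ∈ n.divisorsAntidiagonal,
      μ x.1 • if (x.2 : ℤ) ∣ a then (x.2 : ℂ) else 0 :=
  (sum_eq_iff_sum_smul_moebius_eq.mp (fun _ hk => sum_divisors_ramanujanSum hk.ne' a) n hn).symm

theorem ramanujanSum_congr {n : ℕ} {a b : ℤ} (h : ∀ e, e ∣ n → ((e : ℤ) ∣ a ↔ (e : ℤ) ∣ b)) :
    ramanujanSum n a = ramanujanSum n b := by
  rcases Nat.eq_zero_or_pos n with rfl | hn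
  · simp [ramanujanSum]
  rw [ramanujanSum_eq_sum_moebius hn, ramanujanSum_eq_sum_moebius hn]
  refine sum_congr rfl fun x hx => ?_
  simp only [h x.2 (Nat.dvd_of_mem_divisors (Nat.snd_mem_divisors_of_mem_antidiagonal hx))]

theorem ramanujanSum_gcd {q m : ℕ} (hqm : q ∣ m) (k : ℕ) :
    ramanujanSum q (Nat.gcd k m) = ramanujanSum q k :=
  ramanujanSum_congr fun e he => by
    simp only [Int.natCast_dvd_natCast, Nat.dvd_gcd_iff, and_iff_left (he.trans hqm)]

theorem mul_dvd_mul_add_iff {q r i : ℕ} (hq : q ≠ 0) (hi : Nat.Coprime i q) :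
    q * r ∣ i * r + q ↔ q = r ∧ q ∣ i + 1 := by
  constructor
  · intro h
    have hrq : r ∣ q := (Nat.dvd_add_right (dvd_mul_left r i)).mp ((dvd_mul_left r q).trans h)
    have hqr : q ∣ r :=
      hi.symm.dvd_of_dvd_mul_left ((Nat.dvd_add_left (dvd_refl q)).mp ((dvd_mul_right q r).trans h))
    obtain rfl := Nat.dvd_antisymm hqr hrq
    refine ⟨rfl, Nat.dvd_of_mul_dvd_mul_right (Nat.pos_of_ne_zero hq) ?_⟩
    rwa [add_one_mul]
  · rintro ⟨rfl, h⟩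
    rw [← add_one_mul]
    exact mul_dvd_mul_right h q

theorem dvd_mul_div_add_div_iff {m q r i : ℕ} (hm : m ≠ 0) (hq : q ∣ m) (hr : r ∣ m)
    (hi : Nat.Coprime i q) : m ∣ i * (m / q) + m / r ↔ q = r ∧ q ∣ i + 1 := by
  have hq0 : q ≠ 0 := ne_zero_of_dvd_ne_zero hm hq
  have hr0 : r ≠ 0 := ne_zero_of_dvd_ne_zero hm hr
  have hscale : (i * (m / q) + m / r) * (q * r) = m * (i * r + q) := by
    calc (i * (m / q) + m / r) * (q * r) = i * (m / q * q) * r + m / r * r * q := by ring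
      _ = m * (i * r + q) := by rw [Nat.div_mul_cancel hq, Nat.div_mul_cancel hr]; ring
  rw [← mul_dvd_mul_add_iff hq0 hi, ← mul_dvd_mul_iff_right (mul_ne_zero hq0 hr0), hscale,
    mul_dvd_mul_iff_left hm]

theorem card_filter_coprimeIcc_dvd_add_one {q : ℕ} (hq : q ≠ 0) :
    #{i ∈ coprimeIcc q | q ∣ i + 1} = 1 := by
  rcases (Nat.one_le_iff_ne_zero.mpr hq).eq_or_lt with rfl | hq2
  · rfl
  refine card_eq_one.mpr ⟨q - 1, ext fun i => ?_⟩
  simp only [mem_filter, mem_coprimeIcc, mem_singleton]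
  constructor
  · rintro ⟨⟨⟨hi1, hiq⟩, -⟩, hdvd⟩
    have := Nat.eq_of_dvd_of_lt_two_mul (Nat.succ_ne_zero i) hdvd (by omega)
    omega
  · rintro rfl
    have hq1 : q - 1 + 1 = q := by omega
    refine ⟨⟨⟨by omega, by omega⟩, ?_⟩, by rw [hq1]⟩
    conv_lhs => arg 2; rw [← hq1]
    exact Nat.coprime_self_add_right.mpr (Nat.coprime_one_right _)

theorem sum_Icc_ramanujanSum_mul_exp {m q r : ℕ} (hm : m ≠ 0) (hq : q ∣ m) (hr : r ∣ m) :
    ∑ k ∈ Icc 1 m, ramanujanSum q k * exp (2 * Real.pi * I * k * ((m / r : ℕ) : ℤ) / m) =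
      if q = r then (m : ℂ) else 0 := by
  have hq0 : q ≠ 0 := ne_zero_of_dvd_ne_zero hm hq
  have hr0 : r ≠ 0 := ne_zero_of_dvd_ne_zero hm hr
  calc _ = ∑ k ∈ Icc 1 m, ∑ i ∈ coprimeIcc q,
        exp (2 * Real.pi * I * k * ((i * (m / q) + m / r : ℕ) : ℤ) / m) := by
        refine sum_congr rfl fun k _ => ?_
        rw [ramanujanSum_eq_sum_coprimeIcc, sum_mul]
        refine sum_congr rfl fun i _ => ?_
        rw [← exp_add]
        simp only [Int.cast_natCast]
        push_cast [Nat.cast_div hq (Nat.cast_ne_zero.mpr hq0),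
          Nat.cast_div hr (Nat.cast_ne_zero.mpr hr0)]
        field_simp
    _ = ∑ i ∈ coprimeIcc q, if (m : ℤ) ∣ ((i * (m / q) + m / r : ℕ) : ℤ) then (m : ℂ) else 0 := by
        rw [sum_comm]
        exact sum_congr rfl fun i _ => sum_Icc_exp_eq_ite hm _
    _ = ∑ i ∈ coprimeIcc q, if q = r ∧ q ∣ i + 1 then (m : ℂ) else 0 := by
        refine sum_congr rfl fun i hi => ?_
        simp only [Int.natCast_dvd_natCast,
          dvd_mul_div_add_div_iff hm hq hr (mem_coprimeIcc.mp hi).2]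
    _ = if q = r then (m : ℂ) else 0 := by
        split_ifs with hqr
        · simp only [hqr, true_and]
          rw [← sum_filter, sum_const, card_filter_coprimeIcc_dvd_add_one hr0, one_smul]
        · simp [hqr]

theorem ramanujanSum_orthogonality (m : ℕ) (hm : 1 ≤ m) (d₁ d₂ : ℕ)
    (h₁ : d₁ ∣ m) (h₂ : d₂ ∣ m) :
    ∑ d ∈ m.divisors,
        ramanujanSum d₁ ((m / d : ℕ) : ℤ) * ramanujanSum d ((m / d₂ : ℕ) : ℤ) =
      if d₁ = d₂ then (m : ℂ) else 0 := by
  have hm0 : m ≠ 0 := Nat.one_le_iff_ne_zero.mp hm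
  rw [sum_divisors_mul_ramanujanSum m (fun g => ramanujanSum d₁ g)]
  simp_rw [ramanujanSum_gcd h₁]
  exact sum_Icc_ramanujanSum_mul_exp hm0 h₁ h₂
end

section
/- Let $b$ be an integer, $m \ge 1$, and let $t_1, \dots, t_n$ be positive divisors of $m$. The number of solutions $(x_1, \dots, x_n) \in (\mathbb{Z}/m\mathbb{Z})^n$ of $x_1 + \cdots + x_n \equiv b \pmod{m}$ with $\gcd(x_i, m) = t_i$ for all $i$ equals $\frac{1}{m} \sum_{d \mid m} C_d(b) \prod_{i=1}^n C_{m/t_i}(m/d)$. -/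
open Finset
open ZMod (stdAddChar)

lemma AddChar.map_sum_eq_prod {ι A M : Type*} [AddCommMonoid A] [CommMonoid M]
    (ψ : AddChar A M) (s : Finset ι) (f : ι → A) : ψ (∑ i ∈ s, f i) = ∏ i ∈ s, ψ (f i) := by
  classical
  induction s using Finset.induction_on with
  | empty => simp
  | insert i s hi ih => rw [sum_insert hi, prod_insert hi, AddChar.map_add_eq_mul, ih]

lemma AddChar.sum_piFinset_apply_sum {ι A R : Type*} [Fintype ι] [DecidableEq ι]
    [AddCommMonoid A] [CommSemiring R] (ψ : AddChar A R) (S : ι → Finset A) :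
    ∑ x ∈ Fintype.piFinset S, ψ (∑ i, x i) = ∏ i, ∑ y ∈ S i, ψ y := by
  simp only [prod_univ_sum, AddChar.map_sum_eq_prod]

lemma sum_Icc_one_eq_sum_range {M : Type*} [AddCommGroup M] (g : ℕ → M) {q : ℕ}
    (h : g q = g 0) : ∑ i ∈ Icc 1 q, g i = ∑ i ∈ range q, g i := by
  have shift := sum_range_succ' g q
  rw [sum_range_succ, h, add_left_inj] at shift
  rw [← Ico_add_one_right_eq_Icc, sum_Ico_eq_sum_range, Nat.add_sub_cancel, shift]
  simp only [add_comm 1]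

lemma ramanujanSum_eq_sum_range (q : ℕ) (a : ℤ) :
    ramanujanSum q a = ∑ j ∈ range q with j.gcd q = 1,
      Complex.exp (2 * Real.pi * Complex.I * j * a / q) := by
  rw [ramanujanSum, sum_filter, sum_filter]
  refine sum_Icc_one_eq_sum_range _ ?_
  rcases eq_or_ne q 0 with rfl | hq
  · simp
  have hexp : 2 * Real.pi * Complex.I * q * a / q = a * (2 * Real.pi * Complex.I) := by
    field_simp
  simp [hexp, Complex.exp_int_mul_two_pi_mul_I]

def gcdFiber (m t : ℕ) [NeZero m] : Finset (ZMod m) := {x | x.val.gcd m = t}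

@[simp]
lemma mem_gcdFiber {m t : ℕ} [NeZero m] {x : ZMod m} : x ∈ gcdFiber m t ↔ x.val.gcd m = t := by
  simp [gcdFiber]

lemma ramanujanSum_div_eq_sum_gcdFiber {m t : ℕ} [NeZero m] (ht : t ∣ m) (a : ℤ) :
    ramanujanSum (m / t) a = ∑ x ∈ gcdFiber m t, stdAddChar (x * (a : ZMod m)) := by
  have htpos : 0 < t := Nat.pos_of_dvd_of_pos ht (NeZero.pos m)
  have hm : m = t * (m / t) := (Nat.mul_div_cancel' ht).symm
  have mul_lt {j : ℕ} (hj : j < m / t) : t * j < m := by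
    rw [hm]; exact Nat.mul_lt_mul_of_pos_left hj htpos
  have dvd_val {x : ZMod m} (hx : x.val.gcd m = t) : t ∣ x.val := hx ▸ Nat.gcd_dvd_left _ _
  rw [ramanujanSum_eq_sum_range]
  refine sum_nbij' (fun j => ((t * j : ℕ) : ZMod m)) (fun x => x.val / t) ?_ ?_ ?_ ?_ ?_
  · intro j hj
    simp only [mem_filter, mem_range] at hj
    rw [mem_gcdFiber, ZMod.val_cast_of_lt (mul_lt hj.1), ← Nat.mul_div_cancel' ht, Nat.gcd_mul_left, hj.2, mul_one]
  · intro x hx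
    rw [mem_gcdFiber] at hx
    simp only [mem_filter, mem_range]
    refine ⟨Nat.div_lt_div_of_lt_of_dvd ht (ZMod.val_lt x), ?_⟩
    rw [Nat.gcd_div (dvd_val hx) ht, hx, Nat.div_self htpos]
  · intro j hj
    simp only [mem_filter, mem_range] at hj
    simp only [ZMod.val_cast_of_lt (mul_lt hj.1), Nat.mul_div_cancel_left j htpos]
  · intro x hx
    simp only [Nat.mul_div_cancel' (dvd_val (mem_gcdFiber.mp hx)), ZMod.natCast_zmod_val]
  · intro j _
    have hq : ((m / t : ℕ) : ℂ) = m / t := Nat.cast_div ht (by exact_mod_cast htpos.ne')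
    have htC : (t : ℂ) ≠ 0 := by exact_mod_cast htpos.ne'
    rw [show ((t * j : ℕ) : ZMod m) * a = ((t * j * a : ℤ) : ZMod m) by push_cast; ring,
      ZMod.stdAddChar_coe, hq]
    congr 1
    push_cast
    field_simp

lemma gcd_val_unit_mul {m : ℕ} (u : (ZMod m)ˣ) (x : ZMod m) :
    (u * x : ZMod m).val.gcd m = x.val.gcd m := by
  rw [ZMod.val_mul, (Nat.mod_modEq _ m).gcd_eq]
  exact (ZMod.val_coe_unit_coprime u).gcd_mul_left_cancel _

lemma exists_unit_mul_gcd_val {m : ℕ} [NeZero m] (x : ZMod m) :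
    ∃ u : (ZMod m)ˣ, x = u * (x.val.gcd m : ℕ) := by
  obtain ⟨d, hd, u, hu, rfl⟩ := ZMod.eq_unit_mul_divisor x
  have hgcd : (u * d : ZMod m).val.gcd m = d := by
    rw [← hu.unit_spec, gcd_val_unit_mul, ZMod.val_natCast, (Nat.mod_modEq d m).gcd_eq,
      Nat.gcd_eq_left hd]
  exact ⟨hu.unit, by rw [hgcd, hu.unit_spec]⟩

lemma sum_gcdFiber_unit_mul {M : Type*} [AddCommMonoid M] {m : ℕ} [NeZero m] (t : ℕ)
    (u : (ZMod m)ˣ) (f : ZMod m → M) :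
    ∑ x ∈ gcdFiber m t, f (u * x) = ∑ x ∈ gcdFiber m t, f x :=
  sum_equiv (Units.mulLeft u) (by simp [gcd_val_unit_mul]) fun _ _ => rfl

lemma ramanujanSum_div_eq_of_intCast_eq_unit_mul {m t : ℕ} [NeZero m] (ht : t ∣ m) {a b : ℤ}
    (u : (ZMod m)ˣ) (h : (a : ZMod m) = u * b) :
    ramanujanSum (m / t) a = ramanujanSum (m / t) b := by
  simp_rw [ramanujanSum_div_eq_sum_gcdFiber ht, h, mul_left_comm _ (u : ZMod m), ← mul_assoc]
  exact sum_gcdFiber_unit_mul t u fun x => stdAddChar (x * (b : ZMod m))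

lemma ramanujanSum_neg (q : ℕ) (a : ℤ) : ramanujanSum q (-a) = ramanujanSum q a := by
  rcases eq_or_ne q 0 with rfl | hq
  · simp [ramanujanSum]
  have : NeZero q := ⟨hq⟩
  simpa using ramanujanSum_div_eq_of_intCast_eq_unit_mul (one_dvd q) (-1) (a := -a) (b := a)
    (by push_cast; ring)

lemma ramanujanSum_div_val_eq_gcd {m t : ℕ} [NeZero m] (ht : t ∣ m) (x : ZMod m) :
    ramanujanSum (m / t) x.val = ramanujanSum (m / t) (x.val.gcd m : ℕ) := by
  obtain ⟨u, hu⟩ := exists_unit_mul_gcd_val x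
  exact ramanujanSum_div_eq_of_intCast_eq_unit_mul ht u (by simpa using hu)

lemma mul_card_filter_eq_sum_sum_stdAddChar {α : Type*} {m : ℕ} [NeZero m] (A : Finset α)
    (s : α → ZMod m) (b : ZMod m) :
    (m : ℂ) * #{a ∈ A | s a = b} = ∑ a ∈ A, ∑ k : ZMod m, stdAddChar (k * (s a - b)) := by
  rw [natCast_card_filter, mul_sum]
  refine sum_congr rfl fun a _ => ?_
  simp only [AddChar.sum_mulShift _ (ZMod.isPrimitive_stdAddChar m), sub_eq_zero, ZMod.card]
  split_ifs <;> simp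

lemma mul_card_eq_sum_stdAddChar_mul_prod_ramanujanSum {ι : Type*} [Fintype ι] [DecidableEq ι] {m : ℕ} [NeZero m]
    (b : ℤ) (t : ι → ℕ) (ht : ∀ i, t i ∣ m) :
    (m : ℂ) * #{x : ι → ZMod m | ∑ i, x i = (b : ZMod m) ∧ ∀ i, (x i).val.gcd m = t i} =
      ∑ k : ZMod m, stdAddChar (k * ((-b : ℤ) : ZMod m)) * ∏ i, ramanujanSum (m / t i) k.val := by
  have hfilter : ({x | ∑ i, x i = (b : ZMod m) ∧ ∀ i, (x i).val.gcd m = t i} : Finset _) =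
      {x ∈ Fintype.piFinset fun i => gcdFiber m (t i) | ∑ i, x i = (b : ZMod m)} := by
    ext x
    simp [and_comm]
  rw [hfilter, mul_card_filter_eq_sum_sum_stdAddChar, sum_comm]
  refine sum_congr rfl fun k _ => ?_
  simp_rw [ramanujanSum_div_eq_sum_gcdFiber (ht _), Int.cast_natCast, ZMod.natCast_zmod_val,
    mul_comm _ k, ← AddChar.mulShift_apply (ψ := stdAddChar),
    ← AddChar.sum_piFinset_apply_sum, mul_sum, AddChar.mulShift_apply, ← AddChar.map_add_eq_mul]
  congr! 2
  push_cast
  ring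

lemma sum_stdAddChar_mul_prod_ramanujanSum {ι : Type*} [Fintype ι] {m : ℕ} [NeZero m] (c : ℤ)
    (t : ι → ℕ) (ht : ∀ i, t i ∣ m) :
    ∑ k : ZMod m, stdAddChar (k * (c : ZMod m)) * ∏ i, ramanujanSum (m / t i) k.val =
      ∑ d ∈ m.divisors, ramanujanSum d c * ∏ i, ramanujanSum (m / t i) (m / d : ℕ) := by
  rw [← sum_fiberwise_of_maps_to (g := fun k : ZMod m => k.val.gcd m) (t := m.divisors)
    (by simp [Nat.gcd_dvd_right, NeZero.ne]), ← Nat.sum_div_divisors]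
  refine sum_congr rfl fun g hg => ?_
  have hgm : g ∣ m := Nat.dvd_of_mem_divisors hg
  have hC := ramanujanSum_div_eq_sum_gcdFiber (Nat.div_dvd_of_dvd hgm) c
  rw [Nat.div_div_self hgm (NeZero.ne m)] at hC
  rw [hC, sum_mul]
  refine sum_congr rfl fun k hk => ?_
  simp_rw [ramanujanSum_div_val_eq_gcd (ht _) k, mem_gcdFiber.mp hk]

theorem restricted_congruence_count_general (n m : ℕ) [NeZero m] (b : ℤ)
    (t : Fin n → ℕ) (ht : ∀ i, t i ∣ m) :
    ((Finset.univ.filter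
        (fun x : Fin n → ZMod m =>
          (∑ j, x j = (b : ZMod m)) ∧ ∀ j, Nat.gcd (x j).val m = t j)).card : ℂ) =
      (1 / (m : ℂ)) *
        ∑ d ∈ m.divisors,
          ramanujanSum d b * ∏ i, ramanujanSum (m / t i) ((m / d : ℕ) : ℤ) := by
  have hm : (m : ℂ) ≠ 0 := Nat.cast_ne_zero.mpr (NeZero.ne m)
  have hcount := (mul_card_eq_sum_stdAddChar_mul_prod_ramanujanSum b t ht).trans
    (sum_stdAddChar_mul_prod_ramanujanSum _ t ht)
  simp only [ramanujanSum_neg] at hcount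
  rw [← hcount, one_div, inv_mul_cancel_left₀ hm]
  -- the two filters differ only in their `Decidable` instances
  congr

theorem restricted_congruence_count (n m : ℕ) [NeZero m] (b : ℤ)
    (t : Fin n → ℕ) (ht : ∀ i, t i ∣ m) (htpos : ∀ i, 0 < t i) :
    ((Finset.univ.filter
        (fun x : Fin n → ZMod m =>
          (∑ j, x j = (b : ZMod m)) ∧ ∀ j, Nat.gcd (x j).val m = t j)).card : ℂ) =
      (1 / (m : ℂ)) *
        ∑ d ∈ m.divisors,
          ramanujanSum d b * ∏ i, ramanujanSum (m / t i) ((m / d : ℕ) : ℤ) :=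
  restricted_congruence_count_general n m b t ht
end

section
/- Let $a, b$ be integers, $m \ge 1$, and $t \ge 1$. The congruence $a x \equiv b \pmod{m}$ has a solution $x$ with $\gcd(x, m) = t$ if and only if $t \mid \gcd(b, m)$ and $\gcd(a, m/t) = \gcd(b/t, m/t)$. Moreover, if these conditions hold, the number of such solutions modulo $m$ is exactly $\varphi(m/t) / \varphi(m/(td))$ where $d = \gcd(a, m/t)$. -/
open Finset

theorem exists_iff_exists_of_card_filter_eq {α β : Type*} [Fintype α] [Fintype β] {p : α → Prop}
    {q : β → Prop} [DecidablePred p] [DecidablePred q] (h : #{x | p x} = #{y | q y}) :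
    (∃ x, p x) ↔ ∃ y, q y := by
  have hp : (∃ x, p x) ↔ 0 < #{x | p x} := by simp [card_pos, filter_nonempty_iff]
  have hq : (∃ y, q y) ↔ 0 < #{y | q y} := by simp [card_pos, filter_nonempty_iff]
  rw [hp, hq, h]

theorem MonoidHom.card_fiber_eq_of_surjective {G H : Type*} [Group G] [Group H] [Fintype G]
    [DecidableEq H] (f : G →* H) (hf : Function.Surjective f) (y : H) :
    #{g | f g = y} = Nat.card G / Nat.card H := by
  have hker : Nat.card f.ker * Nat.card H = Nat.card G := by
    rw [← f.ker.card_mul_index, Subgroup.index_ker, range_eq_top_of_surjective f hf,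
      Subgroup.card_top]
  have : Finite H := Finite.of_surjective f hf
  rw [card_fiber_eq_of_mem_range f (hf y) ⟨1, map_one f⟩, ← hker,
    Nat.mul_div_cancel _ Nat.card_pos, Nat.card_eq_fintype_card, Fintype.card_subtype]
  simp only [mem_ker]

namespace ZMod

variable {n t : ℕ}

theorem gcd_val_mul_unit [NeZero n] (x : ZMod n) (u : (ZMod n)ˣ) :
    Nat.gcd (x * u).val n = Nat.gcd x.val n := by
  rw [val_mul, ← (Nat.mod_modEq _ n).symm.gcd_eq]
  exact Nat.Coprime.gcd_mul_right_cancel _ (val_coe_unit_coprime u)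

theorem gcd_val_natCast_of_dvd {d : ℕ} (hd : d ∣ n) : Nat.gcd (d : ZMod n).val n = d := by
  rw [val_natCast, ← (Nat.mod_modEq d n).symm.gcd_eq, Nat.gcd_eq_left hd]

theorem exists_eq_unit_mul_gcd_val [NeZero n] (x : ZMod n) :
    ∃ u : (ZMod n)ˣ, x = u * (Nat.gcd x.val n : ZMod n) := by
  obtain ⟨d, hd, _, ⟨u, rfl⟩, rfl⟩ := eq_unit_mul_divisor x
  refine ⟨u, ?_⟩
  rw [mul_comm (u : ZMod n), gcd_val_mul_unit, gcd_val_natCast_of_dvd hd, mul_comm]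

theorem exists_mul_unit_eq_iff_gcd_val_eq [NeZero n] (x y : ZMod n) :
    (∃ u : (ZMod n)ˣ, x * u = y) ↔ Nat.gcd x.val n = Nat.gcd y.val n := by
  refine ⟨fun ⟨u, hu⟩ => hu ▸ (gcd_val_mul_unit x u).symm, fun h => ?_⟩
  obtain ⟨u, hu⟩ := exists_eq_unit_mul_gcd_val x
  obtain ⟨v, hv⟩ := exists_eq_unit_mul_gcd_val y
  refine ⟨u⁻¹ * v, ?_⟩
  rw [hu, hv, h, Units.val_mul, mul_mul_mul_comm, Units.mul_inv, one_mul, mul_comm]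

theorem natCast_mul_eq_zero_iff [NeZero n] {d k : ℕ} (hn : n = d * k) (z : ZMod n) :
    (d : ZMod n) * z = 0 ↔ castHom (Dvd.intro_left d hn.symm) (ZMod k) z = 0 := by
  have hd : 0 < d := Nat.pos_of_ne_zero (by rintro rfl; exact NeZero.ne n (by simp [hn]))
  rw [castHom_apply, cast_eq_val, natCast_eq_zero_iff]
  nth_rw 1 [← natCast_zmod_val z]
  rw [← Nat.cast_mul, natCast_eq_zero_iff]
  generalize z.val = j
  rw [hn, Nat.mul_dvd_mul_iff_left hd]

theorem mul_eq_mul_iff_unitsMap_eq [NeZero n] (x : ZMod n) (u v : (ZMod n)ˣ) :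
    x * u = x * v ↔ unitsMap (Nat.div_dvd_of_dvd (Nat.gcd_dvd_right x.val n)) u =
      unitsMap (Nat.div_dvd_of_dvd (Nat.gcd_dvd_right x.val n)) v := by
  obtain ⟨w, hw⟩ := exists_eq_unit_mul_gcd_val x
  have hn : n = Nat.gcd x.val n * (n / Nat.gcd x.val n) :=
    (Nat.mul_div_cancel' (Nat.gcd_dvd_right _ _)).symm
  conv_lhs => rw [hw, mul_assoc, mul_assoc, Units.mul_right_inj]
  rw [← sub_eq_zero, ← mul_sub, natCast_mul_eq_zero_iff hn, map_sub, sub_eq_zero, unitsMap_def,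
    ← Units.val_inj, Units.coe_map, Units.coe_map, MonoidHom.coe_coe]

theorem card_filter_mul_unit_eq [NeZero n] {x y : ZMod n} {v : (ZMod n)ˣ} (hv : x * v = y) :
    #{u : (ZMod n)ˣ | x * u = y} = Nat.totient n / Nat.totient (n / Nat.gcd x.val n) := by
  have : NeZero (n / Nat.gcd x.val n) := ⟨(Nat.div_pos (Nat.gcd_le_right _ (NeZero.pos n))
    (Nat.gcd_pos_of_pos_right _ (NeZero.pos n))).ne'⟩
  simp only [← hv, mul_eq_mul_iff_unitsMap_eq]
  rw [MonoidHom.card_fiber_eq_of_surjective _ (unitsMap_surjective _), Nat.card_eq_fintype_card,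
    Nat.card_eq_fintype_card, card_units_eq_totient, card_units_eq_totient]

theorem gcd_val_intCast [NeZero n] (a : ℤ) : Nat.gcd (a : ZMod n).val n = Int.gcd a n := by
  rw [← Int.gcd_natCast_natCast, val_intCast, Int.gcd_emod]

theorem intCast_mul_eq_intCast_mul_iff (ht : t ≠ 0) (y z : ℤ) :
    ((t * y : ℤ) : ZMod (t * n)) = ((t * z : ℤ) : ZMod (t * n)) ↔ (y : ZMod n) = z := by
  rw [intCast_eq_intCast_iff_dvd_sub, intCast_eq_intCast_iff_dvd_sub, ← mul_sub, Nat.cast_mul,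
    mul_dvd_mul_iff_left (by exact_mod_cast ht)]

def scaleUnit (t : ℕ) (u : (ZMod n)ˣ) : ZMod (t * n) :=
  ((t * (u : ZMod n).val : ℕ) : ZMod (t * n))

theorem val_scaleUnit [NeZero n] (ht : t ≠ 0) (u : (ZMod n)ˣ) :
    (scaleUnit t u).val = t * (u : ZMod n).val :=
  val_cast_of_lt (Nat.mul_lt_mul_of_pos_left (val_lt _) (Nat.pos_of_ne_zero ht))

theorem scaleUnit_injective [NeZero n] (ht : t ≠ 0) :
    Function.Injective (scaleUnit (n := n) t) := by
  intro u v huv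
  have := congrArg val huv
  rw [val_scaleUnit ht, val_scaleUnit ht] at this
  exact Units.ext (val_injective n (Nat.eq_of_mul_eq_mul_left (Nat.pos_of_ne_zero ht) this))

theorem gcd_val_eq_iff_exists_scaleUnit [NeZero n] (ht : t ≠ 0) (x : ZMod (t * n)) :
    Nat.gcd x.val (t * n) = t ↔ ∃ u : (ZMod n)ˣ, scaleUnit t u = x := by
  have : NeZero (t * n) := ⟨mul_ne_zero ht (NeZero.ne n)⟩
  constructor
  · intro hx
    obtain ⟨k, hk⟩ : t ∣ x.val := by
      have := Nat.gcd_dvd_left x.val (t * n)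
      rwa [hx] at this
    have hkn : k < n := by
      have := x.val_lt
      rw [hk] at this
      exact Nat.lt_of_mul_lt_mul_left this
    have hcop : k.Coprime n := by
      rw [hk, Nat.gcd_mul_left] at hx
      exact Nat.eq_of_mul_eq_mul_left (Nat.pos_of_ne_zero ht) (hx.trans (mul_one t).symm)
    refine ⟨unitOfCoprime k hcop, ?_⟩
    rw [scaleUnit, coe_unitOfCoprime, val_cast_of_lt hkn, ← hk, natCast_zmod_val]
  · rintro ⟨u, rfl⟩
    rw [val_scaleUnit ht, Nat.gcd_mul_left, val_coe_unit_coprime, mul_one]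

theorem intCast_mul_scaleUnit_eq_iff [NeZero n] (ht : t ≠ 0) (a c : ℤ) (u : (ZMod n)ˣ) :
    (a : ZMod (t * n)) * scaleUnit t u = ((t * c : ℤ) : ZMod (t * n)) ↔ (a : ZMod n) * u = c := by
  have hlhs : (a : ZMod (t * n)) * scaleUnit t u =
      ((t * (a * (u : ZMod n).val) : ℤ) : ZMod (t * n)) := by
    rw [scaleUnit]; push_cast; ring
  rw [hlhs, intCast_mul_eq_intCast_mul_iff ht]
  push_cast
  rw [natCast_zmod_val]

theorem card_filter_gcd_val_eq [NeZero n] [NeZero (t * n)] (a c : ℤ) :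
    #{x : ZMod (t * n) | (a : ZMod (t * n)) * x = ((t * c : ℤ) : ZMod (t * n)) ∧
        Nat.gcd x.val (t * n) = t} = #{u : (ZMod n)ˣ | (a : ZMod n) * u = c} := by
  have ht : t ≠ 0 := left_ne_zero_of_mul (NeZero.ne (t * n))
  rw [← card_image_of_injective _ (scaleUnit_injective ht)]
  congr 1
  ext x
  simp only [mem_filter, mem_univ, true_and, mem_image, gcd_val_eq_iff_exists_scaleUnit ht]
  constructor
  · rintro ⟨hx, u, rfl⟩
    exact ⟨u, (intCast_mul_scaleUnit_eq_iff ht a c u).mp hx, rfl⟩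
  · rintro ⟨u, hu, rfl⟩
    exact ⟨(intCast_mul_scaleUnit_eq_iff ht a c u).mpr hu, u, rfl⟩

theorem dvd_of_mul_eq_of_gcd_val_eq [NeZero n] {a b : ℤ} {x : ZMod n}
    (hx : (a : ZMod n) * x = b) (hgcd : Nat.gcd x.val n = t) : t ∣ n ∧ (t : ℤ) ∣ b := by
  have htn : t ∣ n := hgcd ▸ Nat.gcd_dvd_right _ _
  have htx : ((x.val : ℕ) : ZMod t) = 0 :=
    (natCast_eq_zero_iff _ _).mpr (hgcd ▸ Nat.gcd_dvd_left _ _)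
  refine ⟨htn, (intCast_zmod_eq_zero_iff_dvd b t).mp ?_⟩
  have := congrArg (castHom htn (ZMod t)) hx
  rwa [map_mul, map_intCast, map_intCast, castHom_apply, cast_eq_val, htx, mul_zero,
    eq_comm] at this

end ZMod

theorem single_restricted_congruence_general (a b : ℤ) (m t : ℕ) [NeZero m] :
    ((∃ x : ZMod m, (a : ZMod m) * x = (b : ZMod m) ∧ Nat.gcd x.val m = t) ↔
      (t ∣ Int.gcd b m ∧ Int.gcd a ((m / t : ℕ) : ℤ) = Int.gcd (b / t) ((m / t : ℕ) : ℤ))) ∧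
    ((t ∣ Int.gcd b m ∧ Int.gcd a ((m / t : ℕ) : ℤ) = Int.gcd (b / t) ((m / t : ℕ) : ℤ)) →
      (Finset.univ.filter
          (fun x : ZMod m => (a : ZMod m) * x = (b : ZMod m) ∧ Nat.gcd x.val m = t)).card =
        Nat.totient (m / t) / Nat.totient (m / (t * Int.gcd a ((m / t : ℕ) : ℤ)))) := by
  have htb : t ∣ Int.gcd b m ↔ t ∣ m ∧ (t : ℤ) ∣ b := by
    rw [Int.dvd_gcd_iff, Int.natCast_dvd_natCast, and_comm]
  by_cases h : t ∣ m ∧ (t : ℤ) ∣ b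
  swap
  · have hE : ¬ ∃ x : ZMod m, (a : ZMod m) * x = b ∧ Nat.gcd x.val m = t :=
      fun ⟨_, hx, hgcd⟩ => h (ZMod.dvd_of_mul_eq_of_gcd_val_eq hx hgcd)
    exact ⟨iff_of_false hE fun hP => h (htb.mp hP.1), fun hP => absurd (htb.mp hP.1) h⟩
  have htgcd := htb.mpr h
  obtain ⟨⟨n, rfl⟩, ⟨c, rfl⟩⟩ := h
  have ht : 0 < t := Nat.pos_of_ne_zero (left_ne_zero_of_mul (NeZero.ne (t * n)))
  have : NeZero n := ⟨right_ne_zero_of_mul (NeZero.ne (t * n))⟩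
  have hcard := ZMod.card_filter_gcd_val_eq (t := t) (n := n) a c
  rw [Nat.mul_div_cancel_left n ht, Int.mul_ediv_cancel_left c (by exact_mod_cast ht.ne'),
    Nat.mul_div_mul_left _ _ ht, exists_iff_exists_of_card_filter_eq hcard, hcard,
    ← ZMod.gcd_val_intCast a, ← ZMod.gcd_val_intCast c, ← ZMod.exists_mul_unit_eq_iff_gcd_val_eq]
  simp only [htgcd, true_and]
  exact fun ⟨_, hv⟩ => ZMod.card_filter_mul_unit_eq hv

theorem single_restricted_congruence (a b : ℤ) (m t : ℕ) [NeZero m] (ht : 0 < t) :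
    ((∃ x : ZMod m, (a : ZMod m) * x = (b : ZMod m) ∧ Nat.gcd x.val m = t) ↔
      (t ∣ Int.gcd b m ∧ Int.gcd a ((m / t : ℕ) : ℤ) = Int.gcd (b / t) ((m / t : ℕ) : ℤ))) ∧
    ((t ∣ Int.gcd b m ∧ Int.gcd a ((m / t : ℕ) : ℤ) = Int.gcd (b / t) ((m / t : ℕ) : ℤ)) →
      (Finset.univ.filter
          (fun x : ZMod m => (a : ZMod m) * x = (b : ZMod m) ∧ Nat.gcd x.val m = t)).card =
        Nat.totient (m / t) / Nat.totient (m / (t * Int.gcd a ((m / t : ℕ) : ℤ)))) :=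
  single_restricted_congruence_general a b m t
end
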